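/- Trivial solution of the AoA estimator (Proposition 2): with Ā, d1(0), d2(0,0) as above, if the columns of Ā span a subspace of dimension N (i.e., rank(Ā) = N), then rank([Ā, d1(0), d2(0,0)]) = rank(Ā) = N, and consequently d1(0) and d2(0,0) lie in the column span of Ā; in particular, d1(0) and d2(0,0) are orthogonal to every vector of ℂ^{N²} that is orthogonal to all columns of Ā (so φ = 0 annihilates the MUSIC null-space projection and is a trivial solution of the AoA spectrum). -/

import Mathlib

/-!
Every column of `Ā`, as well as `d1(0)` and `d2(0,0)`, is block-wise a scalar multiple of the
vector `(D_{n'} - D_i)_{n', i}`: on block `n'` the column `p` is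
`S (1 - ω_p) / ((S + ω_p D_{n'}) Y_{n'})` times it. All of them therefore lie in the span of the
`N` block restrictions of that vector, a space of dimension at most `N`. When `rank Ā = N` the
column span of `Ā` fills this space, so it already contains `d1(0)` and `d2(0,0)`.
-/

open scoped BigOperators

/-- Entry `i` of the D-CSIR block `v^{(n')}(ω)`. -/
noncomputable def vblock {N : ℕ} (S : ℂ) (D : Fin N → ℂ) (ω : ℂ) (n' i : Fin N) : ℂ :=
  (S + ω * D i) / (S + ω * D n') - (S + D i) / (S + D n')

/-- The `N² × P` matrix `Ā` whose `p`-th column concatenates the blocks `v^{(n')}(ω_p)`. -/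
noncomputable def AbarMat {N P : ℕ} (S : ℂ) (D : Fin N → ℂ) (ω : Fin P → ℂ) :
    Matrix (Fin N × Fin N) (Fin P) ℂ :=
  fun r p => vblock S D (ω p) r.1 r.2

/-- First-order AoA basis vector at `φ = 0`, with entries `(D_{n'} − D_i)/Y_{n'}²`. -/
noncomputable def d1vec {N : ℕ} (S : ℂ) (D : Fin N → ℂ) : Fin N × Fin N → ℂ :=
  fun r => (D r.1 - D r.2) / (S + D r.1) ^ 2

/-- Second-order AoA basis vector at `φ = 0`, with entries `2(D_i − D_{n'})/Y_{n'}³`. -/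
noncomputable def d2vec {N : ℕ} (S : ℂ) (D : Fin N → ℂ) : Fin N × Fin N → ℂ :=
  fun r => 2 * (D r.2 - D r.1) / (S + D r.1) ^ 3

/-- The augmented matrix `[Ā, d1(0), d2(0,0)]`. -/
noncomputable def augMat {N P : ℕ} (S : ℂ) (D : Fin N → ℂ) (ω : Fin P → ℂ) :
    Matrix (Fin N × Fin N) (Fin P ⊕ Fin 2) ℂ :=
  fun r c =>
    Sum.elim (fun p => AbarMat S D ω r p)
      (fun j => if j = 0 then d1vec S D r else d2vec S D r) c

open Matrix Submodule

variable {ι κ R : Type*}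

def blockRestrict [DecidableEq ι] [Zero R] (u : ι × κ → R) (k : ι) : ι × κ → R :=
  fun r => if r.1 = k then u r else 0

theorem mem_span_range_blockRestrict [Fintype ι] [DecidableEq ι] [CommSemiring R]
    (u : ι × κ → R) (c : ι → R) :
    (fun r => c r.1 * u r) ∈ span R (Set.range (blockRestrict u)) := by
  have h : (fun r => c r.1 * u r) = ∑ k, c k • blockRestrict u k := by
    ext r
    simp [Finset.sum_apply, blockRestrict]
  rw [h]
  exact sum_mem fun k _ => smul_mem _ _ (subset_span ⟨k, rfl⟩)

theorem Matrix.col_fromCols {m n n' α : Type*} (A : Matrix m n α) (B : Matrix m n' α) :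
    (fromCols A B).col = Sum.elim A.col B.col := by
  ext (j | j) i <;> rfl

theorem Matrix.rank_fromCols_of_mem_span {m n n' : Type*} [Fintype m] [Fintype n] [Fintype n']
    [CommRing R] (A : Matrix m n R) (B : Matrix m n' R)
    (hB : ∀ j, B.col j ∈ span R (Set.range A.col)) :
    (fromCols A B).rank = A.rank := by
  have hle : span R (Set.range B.col) ≤ span R (Set.range A.col) :=
    span_le.2 <| Set.range_subset_iff.2 hB
  rw [rank_eq_finrank_span_cols, rank_eq_finrank_span_cols, col_fromCols, Set.Sum.elim_range,
    span_union, sup_eq_left.2 hle]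

theorem sum_star_mul_eq_zero_of_mem_span [Fintype ι] [CommSemiring R] [StarRing R]
    {s : Set (ι → R)} {x : ι → R} (hx : ∀ v ∈ s, ∑ r, star (v r) * x r = 0)
    {y : ι → R} (hy : y ∈ span R s) : ∑ r, star (y r) * x r = 0 := by
  induction hy using span_induction with
  | mem v hv => exact hx v hv
  | zero => simp
  | add v w _ _ hv hw => simp [add_mul, Finset.sum_add_distrib, hv, hw]
  | smul c v _ hv => simp [mul_assoc, ← Finset.mul_sum, hv]

section AoA

variable {N P : ℕ} {S : ℂ} {D : Fin N → ℂ} {ω : Fin P → ℂ}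

theorem vblock_eq_mul_sub {ω : ℂ} {n' : Fin N} (hY : S + D n' ≠ 0) (hω : S + ω * D n' ≠ 0)
    (i : Fin N) :
    vblock S D ω n' i = S * (1 - ω) / ((S + ω * D n') * (S + D n')) * (D n' - D i) := by
  rw [vblock]
  field_simp
  ring

theorem AbarMat_col_mem_span_blockRestrict (hY : ∀ i, S + D i ≠ 0)
    (hω : ∀ p n', S + ω p * D n' ≠ 0) (p : Fin P) :
    (AbarMat S D ω).col p ∈ span ℂ (Set.range (blockRestrict fun r => D r.1 - D r.2)) := by
  have hcol : (AbarMat S D ω).col p =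
      fun r => S * (1 - ω p) / ((S + ω p * D r.1) * (S + D r.1)) * (D r.1 - D r.2) :=
    funext fun r => vblock_eq_mul_sub (hY r.1) (hω p r.1) r.2
  rw [hcol]
  exact mem_span_range_blockRestrict (fun r => D r.1 - D r.2) fun k =>
    S * (1 - ω p) / ((S + ω p * D k) * (S + D k))

theorem d1vec_mem_span_blockRestrict (S : ℂ) (D : Fin N → ℂ) :
    d1vec S D ∈ span ℂ (Set.range (blockRestrict fun r => D r.1 - D r.2)) := by
  have h : d1vec S D = fun r => ((S + D r.1) ^ 2)⁻¹ * (D r.1 - D r.2) :=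
    funext fun r => div_eq_inv_mul _ _
  rw [h]
  exact mem_span_range_blockRestrict (fun r => D r.1 - D r.2) fun k => ((S + D k) ^ 2)⁻¹

theorem d2vec_mem_span_blockRestrict (S : ℂ) (D : Fin N → ℂ) :
    d2vec S D ∈ span ℂ (Set.range (blockRestrict fun r => D r.1 - D r.2)) := by
  have h : d2vec S D = fun r => -2 / (S + D r.1) ^ 3 * (D r.1 - D r.2) :=
    funext fun r => by rw [d2vec]; ring
  rw [h]
  exact mem_span_range_blockRestrict (fun r => D r.1 - D r.2) fun k => -2 / (S + D k) ^ 3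

theorem span_AbarMat_cols_eq_span_blockRestrict (hY : ∀ i, S + D i ≠ 0)
    (hω : ∀ p n', S + ω p * D n' ≠ 0) (hrank : (AbarMat S D ω).rank = N) :
    span ℂ (Set.range (AbarMat S D ω).col)
      = span ℂ (Set.range (blockRestrict fun r : Fin N × Fin N => D r.1 - D r.2)) := by
  refine eq_of_le_of_finrank_le
    (span_le.2 <| Set.range_subset_iff.2 (AbarMat_col_mem_span_blockRestrict hY hω)) ?_
  rw [← rank_eq_finrank_span_cols (AbarMat S D ω), hrank]
  exact (finrank_range_le_card _).trans_eq (Fintype.card_fin N)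

end AoA

theorem aoa_estimator_trivial_solution_general
    (N : ℕ) (S : ℂ) (D : Fin N → ℂ)
    (hY : ∀ i, S + D i ≠ 0)
    (P : ℕ) (ω : Fin P → ℂ)
    (hω : ∀ p n', S + ω p * D n' ≠ 0)
    (hrank : (AbarMat S D ω).rank = N) :
    (augMat S D ω).rank = N ∧
    d1vec S D ∈ Submodule.span ℂ (Set.range fun p r => AbarMat S D ω r p) ∧
    d2vec S D ∈ Submodule.span ℂ (Set.range fun p r => AbarMat S D ω r p) ∧
    (∀ x : Fin N × Fin N → ℂ,
      (∀ p, ∑ r, star (AbarMat S D ω r p) * x r = 0) →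
        (∑ r, star (d1vec S D r) * x r = 0 ∧
         ∑ r, star (d2vec S D r) * x r = 0)) := by
  have hcols := span_AbarMat_cols_eq_span_blockRestrict hY hω hrank
  have hd1 : d1vec S D ∈ span ℂ (Set.range (AbarMat S D ω).col) :=
    hcols ▸ d1vec_mem_span_blockRestrict S D
  have hd2 : d2vec S D ∈ span ℂ (Set.range (AbarMat S D ω).col) :=
    hcols ▸ d2vec_mem_span_blockRestrict S D
  refine ⟨?_, hd1, hd2, fun x hx => ?_⟩
  · change (fromCols (AbarMat S D ω)
      (of fun r (j : Fin 2) => if j = 0 then d1vec S D r else d2vec S D r)).rank = N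
    rw [rank_fromCols_of_mem_span _ _ fun j => ?_, hrank]
    fin_cases j
    exacts [hd1, hd2]
  · have hx' : ∀ v ∈ Set.range (AbarMat S D ω).col, ∑ r, star (v r) * x r = 0 :=
      Set.forall_mem_range.2 hx
    exact ⟨sum_star_mul_eq_zero_of_mem_span hx' hd1, sum_star_mul_eq_zero_of_mem_span hx' hd2⟩

/-- Trivial solution of the AoA estimator (Proposition 2): if `rank(Ā) = N`, then
the augmented matrix `[Ā, d1(0), d2(0,0)]` has the same rank `N`, `d1(0)` and
`d2(0,0)` lie in the column span of `Ā`, and both are orthogonal to every vector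
orthogonal to all columns of `Ā` (so `φ = 0` annihilates the MUSIC null-space
projection). -/
theorem aoa_estimator_trivial_solution
    (N : ℕ) (hN : 1 ≤ N) (S : ℂ) (D : Fin N → ℂ)
    (hY : ∀ i, S + D i ≠ 0)
    (P : ℕ) (hP : 1 ≤ P) (ω : Fin P → ℂ)
    (hω : ∀ p n', S + ω p * D n' ≠ 0)
    (hrank : (AbarMat S D ω).rank = N) :
    (augMat S D ω).rank = N ∧
    d1vec S D ∈ Submodule.span ℂ (Set.range fun p r => AbarMat S D ω r p) ∧
    d2vec S D ∈ Submodule.span ℂ (Set.range fun p r => AbarMat S D ω r p) ∧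
    (∀ x : Fin N × Fin N → ℂ,
      (∀ p, ∑ r, star (AbarMat S D ω r p) * x r = 0) →
        (∑ r, star (d1vec S D r) * x r = 0 ∧
         ∑ r, star (d2vec S D r) * x r = 0)) :=
  aoa_estimator_trivial_solution_general N S D hY P ω hω hrank
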